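/- arXiv:2604.18646 — 2 statements merged into one kernel-verified Lean document; each statement's English description precedes it below -/
import Mathlib

section
/- Suppose the trials i = 1,…,K are partitioned into regimes g = 1,…,G, and suppose there exists β⋆ ∈ ℝ^p such that, writing ε = y − Zβ⋆ and X = [Z A] (the K×(p+q) matrix with rows X_i), the within-regime weighted orthogonality Σ_{i ∈ g} w_i ε_i X_i = 0 holds for every regime g. Define r_i(β,γ) = y_i − Z_iᵀβ − A_iᵀγ, the average loss L_avg(β,γ) = (Σ_i w_i r_i(β,γ)²)/(Σ_i w_i), the regime losses L_g(β,γ) = (Σ_{i∈g} w_i r_i(β,γ)²)/(Σ_{i∈g} w_i), and the softmax robust loss L_rob(β,γ) = α⁻¹ log Σ_{g=1}^G exp(α L_g(β,γ)) for a fixed α > 0. Then for every ρ ∈ [0,1] and every λ_γ ≥ 0, the point (β⋆, 0) is a global minimizer of the blended objective F(β,γ) = (1−ρ) L_avg(β,γ) + ρ L_rob(β,γ) + λ_γ ‖γ‖²; moreover, if ρ < 1 and the weighted Gram matrix XᵀWX is positive definite, then (β⋆, 0) is the unique global minimizer of F. -/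
/-!
Write `δ = (β - β⋆, γ)`. Then the residual at `(β, γ)` is `ε - Xδ`, and because `ε` is
`W`-orthogonal to the columns of `X` inside every regime, each weighted sum of squares splits
as `Σ w ε² + Σ w (Xδ)²` (Pythagoras). Hence every regime loss and the average loss are
minimised at `δ = 0`; log-sum-exp is monotone in each argument, so the robust loss is too,
and the ridge penalty vanishes at `γ = 0`. For uniqueness, `Σ w (Xδ)² = δᵀ XᵀWX δ > 0`
whenever `δ ≠ 0`, which makes the average loss, carrying weight `1 - ρ > 0`, strictly larger.
-/

open Finset Matrix Real

section WeightedLeastSquares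

variable {ι : Type*} (S : Finset ι) (w e t : ι → ℝ)

theorem sum_mul_sub_sq_of_orthogonal (horth : ∑ i ∈ S, w i * e i * t i = 0) :
    ∑ i ∈ S, w i * (e i - t i) ^ 2 =
      ∑ i ∈ S, w i * e i ^ 2 + ∑ i ∈ S, w i * t i ^ 2 := by
  have hexpand : ∀ i, w i * (e i - t i) ^ 2 =
      w i * e i ^ 2 + w i * t i ^ 2 - 2 * (w i * e i * t i) := fun i => by ring
  simp only [hexpand, sum_sub_distrib, sum_add_distrib, ← mul_sum, horth, mul_zero, sub_zero]

theorem div_sum_le_of_orthogonal (hw : ∀ i ∈ S, 0 ≤ w i)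
    (horth : ∑ i ∈ S, w i * e i * t i = 0) :
    (∑ i ∈ S, w i * e i ^ 2) / ∑ i ∈ S, w i ≤
      (∑ i ∈ S, w i * (e i - t i) ^ 2) / ∑ i ∈ S, w i := by
  rw [sum_mul_sub_sq_of_orthogonal S w e t horth]
  gcongr
  · exact sum_nonneg hw
  · exact le_add_of_nonneg_right (sum_nonneg fun i hi => mul_nonneg (hw i hi) (sq_nonneg _))

theorem div_sum_lt_of_orthogonal (hw : ∀ i ∈ S, 0 < w i)
    (horth : ∑ i ∈ S, w i * e i * t i = 0) (ht : 0 < ∑ i ∈ S, w i * t i ^ 2) :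
    (∑ i ∈ S, w i * e i ^ 2) / ∑ i ∈ S, w i <
      (∑ i ∈ S, w i * (e i - t i) ^ 2) / ∑ i ∈ S, w i := by
  rw [sum_mul_sub_sq_of_orthogonal S w e t horth]
  exact div_lt_div_of_pos_right (lt_add_of_pos_right _ ht)
    (sum_pos hw (nonempty_of_sum_ne_zero ht.ne'))

theorem sum_mul_mulVec_eq_zero {κ : Type*} [Fintype κ] {X : Matrix ι κ ℝ}
    (horth : ∀ j, ∑ i ∈ S, w i * e i * X i j = 0) (v : κ → ℝ) :
    ∑ i ∈ S, w i * e i * (X *ᵥ v) i = 0 := by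
  simp only [mulVec, dotProduct, mul_sum, ← mul_assoc]
  rw [sum_comm]
  exact sum_eq_zero fun j _ => by rw [← sum_mul, horth j, zero_mul]

end WeightedLeastSquares

theorem Matrix.PosDef.sum_mul_mulVec_sq_pos {ι κ : Type*} [Fintype ι] [Fintype κ]
    [DecidableEq ι] {X : Matrix ι κ ℝ} {w : ι → ℝ} (hX : (Xᵀ * diagonal w * X).PosDef)
    {v : κ → ℝ} (hv : v ≠ 0) : 0 < ∑ i, w i * (X *ᵥ v) i ^ 2 := by
  have hgram : v ⬝ᵥ (Xᵀ * diagonal w * X) *ᵥ v = ∑ i, w i * (X *ᵥ v) i ^ 2 := by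
    rw [← mulVec_mulVec, ← mulVec_mulVec, dotProduct_mulVec, vecMul_transpose]
    simp only [dotProduct, mulVec_diagonal]
    exact sum_congr rfl fun i _ => by ring
  simpa only [star_trivial, hgram] using hX.dotProduct_mulVec_pos hv

theorem Fin.append_eq_zero_iff {M : Type*} [Zero M] {m n : ℕ} {u : Fin m → M}
    {v : Fin n → M} : Fin.append u v = 0 ↔ u = 0 ∧ v = 0 := by
  refine ⟨fun h => ⟨funext fun i => ?_, funext fun j => ?_⟩, fun ⟨hu, hv⟩ => ?_⟩
  · simpa using congrFun h (Fin.castAdd n i)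
  · simpa using congrFun h (Fin.natAdd m j)
  · subst hu hv
    funext k
    refine Fin.addCases (fun i => ?_) (fun j => ?_) k <;> simp

theorem Matrix.mulVec_append {R : Type*} [NonUnitalNonAssocSemiring R] {K p q : ℕ}
    {Z : Matrix (Fin K) (Fin p) R} {A : Matrix (Fin K) (Fin q) R}
    {X : Matrix (Fin K) (Fin (p + q)) R} (hX : ∀ i, X i = Fin.append (Z i) (A i))
    (u : Fin p → R) (v : Fin q → R) :
    X *ᵥ Fin.append u v = Z *ᵥ u + A *ᵥ v := by
  funext i
  simp [mulVec, dotProduct, hX, Fin.sum_univ_add]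

theorem sub_sum_mul_sub_sum_mul_eq {K p q : ℕ} {Z : Matrix (Fin K) (Fin p) ℝ}
    {A : Matrix (Fin K) (Fin q) ℝ} {X : Matrix (Fin K) (Fin (p + q)) ℝ}
    (hX : ∀ i, X i = Fin.append (Z i) (A i)) {y ε : Fin K → ℝ} {βs : Fin p → ℝ}
    (hε : ∀ i, ε i = y i - ∑ k, Z i k * βs k) (β : Fin p → ℝ) (γ : Fin q → ℝ)
    (i : Fin K) :
    y i - ∑ k, Z i k * β k - ∑ k, A i k * γ k =
      ε i - (X *ᵥ Fin.append (β - βs) γ) i := by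
  rw [hε, mulVec_append hX, mulVec_sub]
  simp only [Pi.add_apply, Pi.sub_apply, mulVec, dotProduct]
  ring

theorem inv_mul_log_sum_exp_mul_le {ι : Type*} [Fintype ι] (α : ℝ) {a b : ι → ℝ}
    (hab : ∀ g, a g ≤ b g) :
    α⁻¹ * log (∑ g, exp (α * a g)) ≤ α⁻¹ * log (∑ g, exp (α * b g)) := by
  rcases isEmpty_or_nonempty ι with hι | hι
  · simp
  have hpos : ∀ c : ι → ℝ, 0 < ∑ g, exp (α * c g) :=
    fun c => sum_pos (fun g _ => exp_pos _) univ_nonempty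
  rcases lt_trichotomy α 0 with hα | rfl | hα
  · refine mul_le_mul_of_nonpos_left (log_le_log (hpos b) ?_) (inv_nonpos.2 hα.le)
    exact sum_le_sum fun g _ => exp_le_exp.2 (mul_le_mul_of_nonpos_left (hab g) hα.le)
  · simp
  · refine mul_le_mul_of_nonneg_left (log_le_log (hpos a) ?_) (inv_nonneg.2 hα.le)
    exact sum_le_sum fun g _ => exp_le_exp.2 (mul_le_mul_of_nonneg_left (hab g) hα.le)

theorem amtma_softmax_consistency_null_anchor_general
    {K G p q : ℕ}
    (y : Fin K → ℝ) (Z : Matrix (Fin K) (Fin p) ℝ) (A : Matrix (Fin K) (Fin q) ℝ)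
    (w : Fin K → ℝ) (hw : ∀ i, 0 < w i)
    (reg : Fin K → Fin G)
    (βs : Fin p → ℝ)
    (X : Matrix (Fin K) (Fin (p + q)) ℝ)
    (hX : ∀ i, X i = Fin.append (Z i) (A i))
    (ε : Fin K → ℝ)
    (hε : ∀ i, ε i = y i - ∑ k, Z i k * βs k)
    (horth : ∀ (g : Fin G) (j : Fin (p + q)),
      ∑ i ∈ Finset.univ.filter (fun i => reg i = g), w i * ε i * X i j = 0)
    (α : ℝ)
    (r : (Fin p → ℝ) → (Fin q → ℝ) → Fin K → ℝ)
    (hr : ∀ β γ i, r β γ i = y i - ∑ k, Z i k * β k - ∑ k, A i k * γ k)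
    (Lavg : (Fin p → ℝ) → (Fin q → ℝ) → ℝ)
    (hLavg : ∀ β γ, Lavg β γ = (∑ i, w i * (r β γ i) ^ 2) / (∑ i, w i))
    (Lg : Fin G → (Fin p → ℝ) → (Fin q → ℝ) → ℝ)
    (hLg : ∀ g β γ, Lg g β γ =
      (∑ i ∈ Finset.univ.filter (fun i => reg i = g), w i * (r β γ i) ^ 2) /
      (∑ i ∈ Finset.univ.filter (fun i => reg i = g), w i))
    (Lrob : (Fin p → ℝ) → (Fin q → ℝ) → ℝ)
    (hLrob : ∀ β γ, Lrob β γ =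
      α⁻¹ * Real.log (∑ g : Fin G, Real.exp (α * Lg g β γ)))
    (ρ lγ : ℝ) (hρ : ρ ∈ Set.Icc (0 : ℝ) 1) (hlγ : 0 ≤ lγ)
    (F : (Fin p → ℝ) → (Fin q → ℝ) → ℝ)
    (hF : ∀ β γ, F β γ =
      (1 - ρ) * Lavg β γ + ρ * Lrob β γ + lγ * ∑ j, (γ j) ^ 2) :
    (∀ β γ, F βs 0 ≤ F β γ) ∧
    (ρ < 1 → (Xᵀ * Matrix.diagonal w * X).PosDef →
      ∀ β γ, (β, γ) ≠ (βs, (0 : Fin q → ℝ)) → F βs 0 < F β γ) := by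
  set δ : (Fin p → ℝ) → (Fin q → ℝ) → Fin (p + q) → ℝ := fun β γ => Fin.append (β - βs) γ
  have hres : ∀ β γ i, r β γ i = ε i - (X *ᵥ δ β γ) i := fun β γ i => by
    rw [hr, sub_sum_mul_sub_sum_mul_eq hX hε]
  have hres0 : ∀ i, r βs 0 i = ε i := fun i => by
    rw [hres, show δ βs 0 = 0 from Fin.append_eq_zero_iff.2 ⟨sub_self βs, rfl⟩, mulVec_zero,
      Pi.zero_apply, sub_zero]
  have hloss_le : ∀ S : Finset (Fin K), (∀ j, ∑ i ∈ S, w i * ε i * X i j = 0) → ∀ β γ,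
      (∑ i ∈ S, w i * r βs 0 i ^ 2) / ∑ i ∈ S, w i ≤
        (∑ i ∈ S, w i * r β γ i ^ 2) / ∑ i ∈ S, w i := by
    intro S hS β γ
    simp only [hres0]
    simp only [hres]
    exact div_sum_le_of_orthogonal _ _ _ _ (fun i _ => (hw i).le)
      (sum_mul_mulVec_eq_zero _ _ _ hS _)
  have horth_univ : ∀ j, ∑ i, w i * ε i * X i j = 0 := fun j => by
    rw [← sum_fiberwise univ reg]
    exact sum_eq_zero fun g _ => horth g j
  have hLavg_le : ∀ β γ, Lavg βs 0 ≤ Lavg β γ := fun β γ => by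
    simpa only [hLavg] using hloss_le _ horth_univ β γ
  have hLrob_le : ∀ β γ, Lrob βs 0 ≤ Lrob β γ := fun β γ => by
    simpa only [hLrob] using inv_mul_log_sum_exp_mul_le α fun g => by
      simpa only [hLg] using hloss_le _ (horth g) β γ
  have hpen : ∀ γ : Fin q → ℝ, 0 ≤ lγ * ∑ j, γ j ^ 2 :=
    fun γ => mul_nonneg hlγ (sum_nonneg fun j _ => sq_nonneg _)
  have hF0 : F βs 0 = (1 - ρ) * Lavg βs 0 + ρ * Lrob βs 0 := by simp [hF]
  have hrob := fun β γ => mul_le_mul_of_nonneg_left (hLrob_le β γ) hρ.1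
  refine ⟨fun β γ => ?_, fun hρ_lt hPD β γ hne => ?_⟩
  · have havg := mul_le_mul_of_nonneg_left (hLavg_le β γ) (sub_nonneg.2 hρ.2)
    linarith [hF β γ, hrob β γ, hpen γ]
  · have hδ : δ β γ ≠ 0 := by
      simpa [δ, Fin.append_eq_zero_iff, sub_eq_zero] using hne
    have hLavg_lt : Lavg βs 0 < Lavg β γ := by
      simp only [hLavg, hres0]
      simp only [hres]
      exact div_sum_lt_of_orthogonal _ _ _ _ (fun i _ => hw i)
        (sum_mul_mulVec_eq_zero _ _ _ horth_univ _) (hPD.sum_mul_mulVec_sq_pos hδ)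
    have havg := mul_lt_mul_of_pos_left hLavg_lt (sub_pos.2 hρ_lt)
    linarith [hF β γ, hrob β γ, hpen γ]

/-- Finite-trial consistency of the AMT-MA blended objective with the softmax
(log-sum-exp) robust loss when the anchor is null: under within-regime weighted
orthogonality of the residuals `ε = y - Zβ⋆` to the joint design `X = [Z A]`,
the point `(β⋆, 0)` globally minimises
`F(β,γ) = (1-ρ) L_avg + ρ L_rob + λ_γ ‖γ‖²` for every `ρ ∈ [0,1]`, `λ_γ ≥ 0`;
and if `ρ < 1` and `XᵀWX` is positive definite, it is the unique minimiser. -/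
theorem amtma_softmax_consistency_null_anchor
    {K G p q : ℕ}
    (y : Fin K → ℝ) (Z : Matrix (Fin K) (Fin p) ℝ) (A : Matrix (Fin K) (Fin q) ℝ)
    (w : Fin K → ℝ) (hw : ∀ i, 0 < w i)
    (reg : Fin K → Fin G) (hreg : ∀ g : Fin G, ∃ i, reg i = g)
    (βs : Fin p → ℝ)
    (X : Matrix (Fin K) (Fin (p + q)) ℝ)
    (hX : ∀ i, X i = Fin.append (Z i) (A i))
    (ε : Fin K → ℝ)
    (hε : ∀ i, ε i = y i - ∑ k, Z i k * βs k)
    (horth : ∀ (g : Fin G) (j : Fin (p + q)),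
      ∑ i ∈ Finset.univ.filter (fun i => reg i = g), w i * ε i * X i j = 0)
    (α : ℝ) (hα : 0 < α)
    (r : (Fin p → ℝ) → (Fin q → ℝ) → Fin K → ℝ)
    (hr : ∀ β γ i, r β γ i = y i - ∑ k, Z i k * β k - ∑ k, A i k * γ k)
    (Lavg : (Fin p → ℝ) → (Fin q → ℝ) → ℝ)
    (hLavg : ∀ β γ, Lavg β γ = (∑ i, w i * (r β γ i) ^ 2) / (∑ i, w i))
    (Lg : Fin G → (Fin p → ℝ) → (Fin q → ℝ) → ℝ)
    (hLg : ∀ g β γ, Lg g β γ =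
      (∑ i ∈ Finset.univ.filter (fun i => reg i = g), w i * (r β γ i) ^ 2) /
      (∑ i ∈ Finset.univ.filter (fun i => reg i = g), w i))
    (Lrob : (Fin p → ℝ) → (Fin q → ℝ) → ℝ)
    (hLrob : ∀ β γ, Lrob β γ =
      α⁻¹ * Real.log (∑ g : Fin G, Real.exp (α * Lg g β γ)))
    (ρ lγ : ℝ) (hρ : ρ ∈ Set.Icc (0 : ℝ) 1) (hlγ : 0 ≤ lγ)
    (F : (Fin p → ℝ) → (Fin q → ℝ) → ℝ)
    (hF : ∀ β γ, F β γ =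
      (1 - ρ) * Lavg β γ + ρ * Lrob β γ + lγ * ∑ j, (γ j) ^ 2) :
    (∀ β γ, F βs 0 ≤ F β γ) ∧
    (ρ < 1 → (Xᵀ * Matrix.diagonal w * X).PosDef →
      ∀ β γ, (β, γ) ≠ (βs, (0 : Fin q → ℝ)) → F βs 0 < F β γ) :=
  amtma_softmax_consistency_null_anchor_general y Z A w hw reg βs X hX ε hε horth α r hr Lavg hLavg
    Lg hLg Lrob hLrob ρ lγ hρ hlγ F hF
end

section
/- Suppose W is a K×K diagonal matrix with positive diagonal entries, ZᵀWZ is invertible, ZᵀWA = 0 (weighted orthogonality of moderators and anchors), and y = Zβ⋆ + Aγ₀ for some β⋆ ∈ ℝ^p and γ₀ ∈ ℝ^q. Then for every λ_γ ≥ 0, every minimizer (β̂, γ̂) of the joint ridge objective L(β,γ) + λ_γ‖γ‖², with L(β,γ) = (y − Zβ − Aγ)ᵀW(y − Zβ − Aγ), satisfies β̂ = β⋆. -/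
open Matrix BigOperators

/-- No ridge bias on `β` under weighted orthogonality: if `ZᵀWZ` is invertible,
`ZᵀWA = 0`, and `y = Zβ⋆ + Aγ₀`, then for every `λ_γ ≥ 0` every minimiser
`(β̂, γ̂)` of the joint ridge objective `L(β,γ) + λ_γ‖γ‖²`, with
`L(β,γ) = (y - Zβ - Aγ)ᵀW(y - Zβ - Aγ)`, satisfies `β̂ = β⋆`. -/
theorem ridge_unbiased_beta_under_weighted_orthogonality
    {K p q : ℕ}
    (Z : Matrix (Fin K) (Fin p) ℝ) (A : Matrix (Fin K) (Fin q) ℝ)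
    (w : Fin K → ℝ) (hw : ∀ i, 0 < w i)
    (W : Matrix (Fin K) (Fin K) ℝ) (hW : W = Matrix.diagonal w)
    (hinv : IsUnit (Zᵀ * W * Z))
    (horth : Zᵀ * W * A = 0)
    (βs : Fin p → ℝ) (γ₀ : Fin q → ℝ)
    (y : Fin K → ℝ) (hy : y = Z.mulVec βs + A.mulVec γ₀)
    (L : (Fin p → ℝ) → (Fin q → ℝ) → ℝ)
    (hL : ∀ β γ, L β γ =
      (y - Z.mulVec β - A.mulVec γ) ⬝ᵥ W.mulVec (y - Z.mulVec β - A.mulVec γ))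
    (lamγ : ℝ) (hlamγ : 0 ≤ lamγ) :
    ∀ βh γh,
      (∀ β γ, L βh γh + lamγ * ∑ j, (γh j) ^ 2 ≤ L β γ + lamγ * ∑ j, (γ j) ^ 2) →
      βh = βs := by
  intro βh γh hmin
  have hle : L βh γh ≤ L βs γh := by linarith [hmin βs γh]
  set d := βs - βh with hd
  set e := γ₀ - γh with he
  set u := Z.mulVec d with hu
  set v := A.mulVec e with hv
  have hr1 : y - Z.mulVec βh - A.mulVec γh = u + v := by
    rw [hy, hu, hv, hd, he, Matrix.mulVec_sub, Matrix.mulVec_sub]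
    abel
  have hr2 : y - Z.mulVec βs - A.mulVec γh = v := by
    rw [hy, hv, he, Matrix.mulVec_sub]
    abel
  -- cross term vanishes
  have hcross : u ⬝ᵥ W.mulVec v = 0 := by
    have : u ⬝ᵥ W.mulVec v = d ⬝ᵥ (Zᵀ * W * A).mulVec e := by
      rw [← Matrix.mulVec_mulVec, ← Matrix.mulVec_mulVec, Matrix.dotProduct_mulVec d,
        Matrix.vecMul_transpose, Matrix.dotProduct_mulVec]
    rw [this, horth]
    simp
  have hWsymm : Wᵀ = W := by rw [hW]; exact Matrix.diagonal_transpose w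
  have hcross' : v ⬝ᵥ W.mulVec u = 0 := by
    rw [Matrix.dotProduct_mulVec, ← Matrix.mulVec_transpose, hWsymm, dotProduct_comm]
    exact hcross
  have hLβh : L βh γh = u ⬝ᵥ W.mulVec u + v ⬝ᵥ W.mulVec v := by
    rw [hL, hr1, Matrix.mulVec_add, add_dotProduct, dotProduct_add,
      dotProduct_add, hcross, hcross']
    ring
  have hLβs : L βs γh = v ⬝ᵥ W.mulVec v := by rw [hL, hr2]
  have hq : u ⬝ᵥ W.mulVec u ≤ 0 := by
    rw [hLβh, hLβs] at hle; linarith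
  have hsum : u ⬝ᵥ W.mulVec u = ∑ i, w i * u i ^ 2 := by
    rw [hW]
    simp only [dotProduct, Matrix.mulVec_diagonal]
    exact Finset.sum_congr rfl fun i _ => by ring
  have hzero : ∀ i, u i = 0 := by
    have hsum0 : ∑ i, w i * u i ^ 2 = 0 := le_antisymm (hsum ▸ hq)
      (Finset.sum_nonneg fun i _ => mul_nonneg (hw i).le (sq_nonneg _))
    intro i
    have := (Finset.sum_eq_zero_iff_of_nonneg
      (fun i _ => mul_nonneg (hw i).le (sq_nonneg (u i)))).mp hsum0 i (Finset.mem_univ i)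
    have := mul_eq_zero.mp this
    rcases this with h | h
    · exact absurd h (hw i).ne'
    · exact pow_eq_zero_iff (by norm_num) |>.mp h
  have hu0 : u = 0 := funext hzero
  have hMd : (Zᵀ * W * Z).mulVec d = 0 := by
    rw [← Matrix.mulVec_mulVec, ← Matrix.mulVec_mulVec, ← hu, hu0]
    simp
  have hd0 : d = 0 := by
    obtain ⟨M, hM⟩ := hinv.exists_left_inv
    have : (M * (Zᵀ * W * Z)).mulVec d = 0 := by
      rw [← Matrix.mulVec_mulVec, hMd]; simp
    rwa [hM, Matrix.one_mulVec] at this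
  have : βs - βh = 0 := hd0
  have := sub_eq_zero.mp this
  exact this.symm
end
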